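/- arXiv:2106.03934 — 2 statements merged into one kernel-verified Lean document; each statement's English description precedes it below -/
import Mathlib

section
/- Let ρ, η : A → ℝ be functions on a finite set A of cardinality n with |ρ(a)| ≤ R for all a and ∑_{a∈A} |η(a)| ≤ 2, and let Λ be a uniformly random m-element subset of A. Set τ = ∑_{a∈Λ} ρ(a)η(a) and Δ = ∑_{a∈A} ρ(a)η(a). Then for any δ > 0, P[τ · Δ ≤ -δ] ≤ (1 + (nδ + mΔ²)/(2nR²))^{-1}. -/
open scoped Classical

lemma psc_count_superset {α : Type*} [DecidableEq α] {A s : Finset α} {m : ℕ}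
    (hs : s ⊆ A) (hk : s.card ≤ m) :
    ((A.powersetCard m).filter (fun Λ => s ⊆ Λ)).card
      = (A.card - s.card).choose (m - s.card) := by
  rw [← Finset.card_sdiff_of_subset hs, ← Finset.card_powersetCard (m - s.card) (A \ s)]
  refine Finset.card_bij' (fun Λ _ => Λ \ s) (fun t _ => t ∪ s) ?_ ?_ ?_ ?_
  · intro Λ hΛ
    simp only [Finset.mem_filter, Finset.mem_powersetCard] at hΛ
    refine Finset.mem_powersetCard.2 ⟨Finset.sdiff_subset_sdiff hΛ.1.1 le_rfl, ?_⟩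
    rw [Finset.card_sdiff_of_subset hΛ.2, hΛ.1.2]
  · intro t ht
    rw [Finset.mem_powersetCard] at ht
    have hdisj : Disjoint t s := Finset.disjoint_left.2 fun x hx =>
      (Finset.mem_sdiff.1 (ht.1 hx)).2
    refine Finset.mem_filter.2 ⟨Finset.mem_powersetCard.2 ⟨?_, ?_⟩, Finset.subset_union_right⟩
    · exact Finset.union_subset (ht.1.trans (Finset.sdiff_subset)) hs
    · rw [Finset.card_union_of_disjoint hdisj, ht.2, Nat.sub_add_cancel hk]
  · intro Λ hΛ
    simp only [Finset.mem_filter] at hΛ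
    exact Finset.sdiff_union_of_subset hΛ.2
  · intro t ht
    rw [Finset.mem_powersetCard] at ht
    have hdisj : Disjoint t s := Finset.disjoint_left.2 fun x hx =>
      (Finset.mem_sdiff.1 (ht.1 hx)).2
    rw [Finset.union_sdiff_distrib, Finset.sdiff_self, Finset.union_empty,
      Finset.sdiff_eq_self_of_disjoint hdisj]

lemma psc_sum_linear {α : Type*} [DecidableEq α] (A : Finset α) (m : ℕ)
    (hm1 : 1 ≤ m) (hmn : m ≤ A.card) (x : α → ℝ) :
    ∑ Λ ∈ A.powersetCard m, ∑ a ∈ Λ, x a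
      = ((A.card - 1).choose (m - 1) : ℝ) * ∑ a ∈ A, x a := by
  have step1 : ∀ Λ ∈ A.powersetCard m, ∑ a ∈ Λ, x a
      = ∑ a ∈ A, if a ∈ Λ then x a else 0 := by
    intro Λ hΛ
    rw [Finset.sum_ite_mem, Finset.inter_eq_right.2 (Finset.mem_powersetCard.1 hΛ).1]
  rw [Finset.sum_congr rfl step1, Finset.sum_comm, Finset.mul_sum]
  refine Finset.sum_congr rfl fun a ha => ?_
  rw [Finset.sum_ite, Finset.sum_const, Finset.sum_const_zero, add_zero, nsmul_eq_mul]
  congr 1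
  have : (A.powersetCard m).filter (fun Λ => a ∈ Λ)
      = (A.powersetCard m).filter (fun Λ => {a} ⊆ Λ) := by
    simp [Finset.singleton_subset_iff]
  rw [this, psc_count_superset (Finset.singleton_subset_iff.2 ha)
    (by simpa using hm1), Finset.card_singleton]

lemma psc_sum_sq {α : Type*} [DecidableEq α] (A : Finset α) (m : ℕ)
    (hm1 : 1 ≤ m) (hmn : m ≤ A.card) (x : α → ℝ) :
    ∑ Λ ∈ A.powersetCard m, (∑ a ∈ Λ, x a) ^ 2
      = (if m = 1 then 0 else ((A.card - 2).choose (m - 2) : ℝ)) * (∑ a ∈ A, x a) ^ 2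
        + (((A.card - 1).choose (m - 1) : ℝ)
            - (if m = 1 then 0 else ((A.card - 2).choose (m - 2) : ℝ)))
          * ∑ a ∈ A, (x a) ^ 2 := by
  set c1 : ℝ := ((A.card - 1).choose (m - 1) : ℝ) with hc1
  set c2 : ℝ := (if m = 1 then 0 else ((A.card - 2).choose (m - 2) : ℝ)) with hc2
  have hcount : ∀ a ∈ A, ∀ b ∈ A,
      (((A.powersetCard m).filter (fun Λ => a ∈ Λ ∧ b ∈ Λ)).card : ℝ)
        = if b = a then c1 else c2 := by
    intro a ha b hb
    by_cases hab : b = a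
    · subst hab
      have : (A.powersetCard m).filter (fun Λ => b ∈ Λ ∧ b ∈ Λ)
          = (A.powersetCard m).filter (fun Λ => {b} ⊆ Λ) := by
        simp [Finset.singleton_subset_iff]
      rw [this, psc_count_superset (Finset.singleton_subset_iff.2 hb)
        (by simpa using hm1), Finset.card_singleton, if_pos rfl]
    · have hpair : (A.powersetCard m).filter (fun Λ => a ∈ Λ ∧ b ∈ Λ)
          = (A.powersetCard m).filter (fun Λ => ({a, b} : Finset α) ⊆ Λ) := by
        simp [Finset.insert_subset_iff, Finset.singleton_subset_iff]
      have hcard2 : ({a, b} : Finset α).card = 2 := by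
        rw [Finset.card_insert_of_notMem (by simp [Ne.symm hab]), Finset.card_singleton]
      rw [hpair, if_neg hab]
      by_cases hm : m = 1
      · subst hm
        have : (A.powersetCard 1).filter (fun Λ => ({a, b} : Finset α) ⊆ Λ) = ∅ := by
          refine Finset.filter_false_of_mem fun Λ hΛ hsub => ?_
          have h2 := Finset.card_le_card hsub
          rw [hcard2, (Finset.mem_powersetCard.1 hΛ).2] at h2
          omega
        rw [hc2, if_pos rfl, this]
        simp
      · rw [psc_count_superset (Finset.insert_subset ha
          (Finset.singleton_subset_iff.2 hb)) (by omega), hcard2, hc2, if_neg hm]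
  have step1 : ∀ Λ ∈ A.powersetCard m, (∑ a ∈ Λ, x a) ^ 2
      = ∑ a ∈ A, ∑ b ∈ A,
          (if a ∈ Λ then x a else 0) * (if b ∈ Λ then x b else 0) := by
    intro Λ hΛ
    rw [← Finset.sum_mul_sum]
    have h : ∑ a ∈ A, (if a ∈ Λ then x a else 0) = ∑ a ∈ Λ, x a := by
      rw [Finset.sum_ite_mem, Finset.inter_eq_right.2 (Finset.mem_powersetCard.1 hΛ).1]
    rw [h, sq]
  rw [Finset.sum_congr rfl step1, Finset.sum_comm]
  have step2 : ∀ a ∈ A, ∑ Λ ∈ A.powersetCard m, ∑ b ∈ A,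
        (if a ∈ Λ then x a else 0) * (if b ∈ Λ then x b else 0)
      = ∑ b ∈ A, (if b = a then c1 else c2) * (x a * x b) := by
    intro a ha
    rw [Finset.sum_comm]
    refine Finset.sum_congr rfl fun b hb => ?_
    simp only [ite_mul, zero_mul, mul_ite, mul_zero]
    rw [Finset.sum_ite, Finset.sum_const_zero, add_zero, Finset.sum_ite,
      Finset.sum_const, Finset.sum_const_zero, add_zero, nsmul_eq_mul,
      Finset.filter_filter, hcount b hb a ha]
    by_cases h : b = a
    · simp [h]
    · rw [if_neg fun h' => h h'.symm, if_neg h]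
  rw [Finset.sum_congr rfl step2]
  have step3 : ∀ a ∈ A, ∑ b ∈ A, (if b = a then c1 else c2) * (x a * x b)
      = c2 * (x a * ∑ b ∈ A, x b) + (c1 - c2) * x a ^ 2 := by
    intro a ha
    have : ∀ b, (if b = a then c1 else c2) * (x a * x b)
        = c2 * (x a * x b) + (if b = a then (c1 - c2) * (x a * x b) else 0) := by
      intro b; split_ifs <;> ring
    simp only [this]
    rw [Finset.sum_add_distrib, Finset.sum_ite_eq' A a
      (fun b => (c1 - c2) * (x a * x b)), if_pos ha, ← Finset.mul_sum, ← Finset.mul_sum]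
    ring
  have h4 : ∑ a ∈ A, c2 * (x a * ∑ b ∈ A, x b) = c2 * (∑ a ∈ A, x a) ^ 2 := by
    rw [← Finset.mul_sum, ← Finset.sum_mul, sq]
  have h5 : ∑ a ∈ A, (c1 - c2) * x a ^ 2 = (c1 - c2) * ∑ a ∈ A, x a ^ 2 :=
    (Finset.mul_sum _ _ _).symm
  rw [Finset.sum_congr rfl step3, Finset.sum_add_distrib, h4, h5]
set_option maxHeartbeats 1000000 in
/-- Per-state comparison bound (Theorem 3 of the paper, abstract form): with
`τ_Λ = ∑_{a∈Λ} ρ(a)η(a)` for `Λ` a uniformly random `m`-element subset of `A`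
and `Δ = ∑_{a∈A} ρ(a)η(a)`, for any `δ > 0`,
`P[τ·Δ ≤ -δ] ≤ (1 + (nδ + mΔ²)/(2nR²))⁻¹`. -/
theorem per_state_comparison_bound {α : Type*} [DecidableEq α]
    (A : Finset α) (ρ η : α → ℝ) (n m : ℕ) (R δ : ℝ)
    (hn : A.card = n) (hm1 : 1 ≤ m) (hmn : m ≤ n)
    (hR : 0 < R) (hρ : ∀ a ∈ A, |ρ a| ≤ R)
    (hη1 : ∀ a ∈ A, |η a| ≤ 1) (hη : ∑ a ∈ A, |η a| ≤ 2)
    (hδ : 0 < δ) :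
    (((A.powersetCard m).filter
        (fun Λ => (∑ a ∈ Λ, ρ a * η a) * (∑ a ∈ A, ρ a * η a) ≤ -δ)).card : ℝ)
        / (n.choose m : ℝ)
      ≤ (1 + ((n : ℝ) * δ + (m : ℝ) * (∑ a ∈ A, ρ a * η a) ^ 2)
            / (2 * n * R ^ 2))⁻¹ := by
  set x : α → ℝ := fun a => ρ a * η a with hx
  clear_value x
  set Δ : ℝ := ∑ a ∈ A, x a with hΔdef
  clear_value Δ
  have hn1 : 1 ≤ n := le_trans hm1 hmn
  have hnR : (0:ℝ) < n := by exact_mod_cast hn1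
  have hmR : (0:ℝ) < m := by exact_mod_cast hm1
  have hmnR : (m:ℝ) ≤ n := by exact_mod_cast hmn
  set N : ℝ := (n.choose m : ℝ) with hNdef
  clear_value N
  have hNpos : (0:ℝ) < N := by
    rw [hNdef]; exact_mod_cast Nat.choose_pos hmn
  set W : ℝ := (n:ℝ) * δ + (m:ℝ) * Δ ^ 2 with hWdef
  clear_value W
  have hW0 : 0 < W := by
    have h1 : 0 < (n:ℝ) * δ := mul_pos hnR hδ
    have h2 : 0 ≤ (m:ℝ) * Δ ^ 2 := mul_nonneg hmR.le (sq_nonneg _)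
    linarith
  have hRHSpos : 0 < 1 + W / (2 * n * R ^ 2) := by
    have : 0 < W / (2 * n * R ^ 2) := div_pos hW0 (by positivity)
    linarith
  -- trivial case Δ = 0
  by_cases hΔ0 : Δ = 0
  · have hemp : (A.powersetCard m).filter
        (fun Λ => (∑ a ∈ Λ, x a) * Δ ≤ -δ) = ∅ := by
      refine Finset.filter_false_of_mem fun Λ _ h => ?_
      rw [hΔ0, mul_zero] at h
      linarith
    rw [hemp]
    simp only [Finset.card_empty, Nat.cast_zero, zero_div]
    exact (inv_nonneg.2 hRHSpos.le)
  -- main case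
  set c1 : ℝ := ((n - 1).choose (m - 1) : ℝ) with hc1def
  clear_value c1
  set c2 : ℝ := (if m = 1 then 0 else ((n - 2).choose (m - 2) : ℝ)) with hc2def
  clear_value c2
  have hc2nn : 0 ≤ c2 := by rw [hc2def]; split_ifs <;> positivity
  have hid1 : (n:ℝ) * c1 = (m:ℝ) * N := by
    obtain ⟨n', rfl⟩ : ∃ n', n = n' + 1 := ⟨n - 1, by omega⟩
    obtain ⟨m', rfl⟩ : ∃ m', m = m' + 1 := ⟨m - 1, by omega⟩
    rw [hc1def, hNdef]
    simp only [Nat.add_sub_cancel]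
    exact_mod_cast (Nat.add_one_mul_choose_eq n' m').trans (Nat.mul_comm _ _)
  have hid2 : N * c2 ≤ c1 ^ 2 := by
    by_cases hm : m = 1
    · rw [hc2def, if_pos hm, mul_zero]; positivity
    · have hm2 : 2 ≤ m := by omega
      have hn2 : 2 ≤ n := le_trans hm2 hmn
      have hid2' : ((n:ℝ) - 1) * c2 = ((m:ℝ) - 1) * c1 := by
        rw [hc2def, if_neg hm, hc1def]
        obtain ⟨n', rfl⟩ : ∃ n', n = n' + 2 := ⟨n - 2, by omega⟩
        obtain ⟨m', rfl⟩ : ∃ m', m = m' + 2 := ⟨m - 2, by omega⟩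
        simp only [Nat.add_sub_cancel, show n' + 2 - 1 = n' + 1 by omega,
          show m' + 2 - 1 = m' + 1 by omega]
        push_cast
        have hnat : (n' + 1) * Nat.choose n' m' = (m' + 1) * Nat.choose (n' + 1) (m' + 1) :=
          (Nat.add_one_mul_choose_eq n' m').trans (Nat.mul_comm _ _)
        have : ((n':ℝ) + 1) * (Nat.choose n' m' : ℝ)
            = ((m':ℝ) + 1) * (Nat.choose (n' + 1) (m' + 1) : ℝ) := by exact_mod_cast hnat
        linarith
      have key : (m:ℝ) * ((n:ℝ) - 1) * (N * c2) = (n:ℝ) * ((m:ℝ) - 1) * c1 ^ 2 := by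
        have : (m:ℝ) * ((n:ℝ) - 1) * (N * c2)
            = ((m:ℝ) * N) * (((n:ℝ) - 1) * c2) := by ring
        rw [this, ← hid1, hid2']
        ring
      have hmn1 : (n:ℝ) * ((m:ℝ) - 1) ≤ (m:ℝ) * ((n:ℝ) - 1) := by nlinarith
      have hpos : 0 < (m:ℝ) * ((n:ℝ) - 1) := by
        have h1 : (1:ℝ) < n := by exact_mod_cast (by omega : 1 < n)
        nlinarith
      clear * - key hmn1 hpos
      nlinarith [sq_nonneg c1]
  -- second moment bound for x
  set Q : ℝ := ∑ a ∈ A, (x a) ^ 2 with hQdef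
  clear_value Q
  have hQ0 : 0 ≤ Q := by
    rw [hQdef]; exact Finset.sum_nonneg fun a _ => sq_nonneg _
  have hQ2 : Q ≤ 2 * R ^ 2 := by
    have hpt : ∀ a ∈ A, (x a) ^ 2 ≤ R ^ 2 * |η a| := by
      intro a ha
      have h1 := abs_le.1 (hρ a ha)
      have h2 := hη1 a ha
      have h3 := abs_nonneg (η a)
      have h4 : (η a) ^ 2 ≤ |η a| := by
        clear * - h2 h3
        nlinarith [sq_abs (η a)]
      have h5 : (ρ a) ^ 2 ≤ R ^ 2 := by clear * - h1; nlinarith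
      have : (x a) ^ 2 = (ρ a) ^ 2 * (η a) ^ 2 := by rw [hx]; ring
      rw [this]
      calc (ρ a) ^ 2 * (η a) ^ 2 ≤ R ^ 2 * (η a) ^ 2 :=
            mul_le_mul_of_nonneg_right h5 (sq_nonneg _)
        _ ≤ R ^ 2 * |η a| := mul_le_mul_of_nonneg_left h4 (by positivity)
    calc Q = ∑ a ∈ A, (x a) ^ 2 := hQdef
      _ ≤ ∑ a ∈ A, R ^ 2 * |η a| := Finset.sum_le_sum hpt
      _ = R ^ 2 * ∑ a ∈ A, |η a| := (Finset.mul_sum _ _ _).symm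
      _ ≤ R ^ 2 * 2 := mul_le_mul_of_nonneg_left hη (by positivity)
      _ = 2 * R ^ 2 := by ring
  -- the two moment identities
  set S : Finset (Finset α) := A.powersetCard m with hSdef
  clear_value S
  have hcardS : (S.card : ℝ) = N := by rw [hSdef, Finset.card_powersetCard, hn, hNdef]
  have hSf : ∑ Λ ∈ S, (∑ a ∈ Λ, x a) * Δ = c1 * Δ ^ 2 := by
    rw [hSdef, ← Finset.sum_mul, psc_sum_linear A m hm1 (hn ▸ hmn) x, hn, ← hΔdef, ← hc1def]
    ring
  have hSf2 : ∑ Λ ∈ S, ((∑ a ∈ Λ, x a) * Δ) ^ 2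
      = Δ ^ 2 * (c2 * Δ ^ 2 + (c1 - c2) * Q) := by
    have : ∀ Λ, ((∑ a ∈ Λ, x a) * Δ) ^ 2 = (∑ a ∈ Λ, x a) ^ 2 * Δ ^ 2 := by
      intro Λ; ring
    simp only [this]
    rw [hSdef, ← Finset.sum_mul, psc_sum_sq A m hm1 (hn ▸ hmn) x, hn, ← hΔdef, ← hQdef,
      ← hc1def, ← hc2def]
    ring
  -- Cantelli machinery
  set f : Finset α → ℝ := fun Λ => (∑ a ∈ Λ, x a) * Δ with hfdef
  clear_value f
  set μ : ℝ := (m:ℝ) * Δ ^ 2 / n with hμdef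
  clear_value μ
  have hc1v : c1 = (m:ℝ) * N / n := by
    rw [eq_div_iff hnR.ne']
    linarith [hid1]
  have hSfμ : ∑ Λ ∈ S, f Λ = N * μ := by
    have h1 : ∑ Λ ∈ S, f Λ = c1 * Δ ^ 2 := hSf
    rw [h1, hμdef, hc1v]
    ring
  set t : ℝ := W / n with htdef
  clear_value t
  have ht : 0 < t := by rw [htdef]; exact div_pos hW0 hnR
  have htμ : t = δ + μ := by rw [htdef, hμdef, hWdef]; field_simp
  set Sf2 : ℝ := ∑ Λ ∈ S, (f Λ) ^ 2 with hSf2def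
  clear_value Sf2
  set σ2 : ℝ := Sf2 / N - μ ^ 2 with hσ2def
  clear_value σ2
  have hvar : ∑ Λ ∈ S, (f Λ - μ) ^ 2 = N * σ2 := by
    have expand : ∀ Λ, (f Λ - μ) ^ 2 = (f Λ) ^ 2 - 2 * μ * f Λ + μ ^ 2 := by
      intro Λ; ring
    simp only [expand]
    rw [Finset.sum_add_distrib, Finset.sum_sub_distrib, ← Finset.mul_sum,
      Finset.sum_const, nsmul_eq_mul, hcardS, hSfμ, ← hSf2def, hσ2def]
    field_simp
    ring
  have hσ2nn : 0 ≤ σ2 := by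
    have h := Finset.sum_nonneg (fun Λ (_ : Λ ∈ S) => sq_nonneg (f Λ - μ))
    rw [hvar] at h
    have h' : N * 0 ≤ N * σ2 := by simpa using h
    exact le_of_mul_le_mul_left h' hNpos
  set u : ℝ := σ2 / t with hudef
  clear_value u
  have hu0 : 0 ≤ u := by rw [hudef]; exact div_nonneg hσ2nn ht.le
  have htu : 0 < t + u := by linarith
  set E := S.filter (fun Λ => (∑ a ∈ Λ, x a) * Δ ≤ -δ) with hEdef
  clear_value E
  have hkey : (E.card : ℝ) * (t + u) ^ 2 ≤ N * (σ2 + u ^ 2) := by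
    have h1 : (E.card : ℝ) * (t + u) ^ 2 = ∑ Λ ∈ E, (t + u) ^ 2 := by
      rw [Finset.sum_const, nsmul_eq_mul]
    have h2 : ∀ Λ ∈ E, (t + u) ^ 2 ≤ (μ + u - f Λ) ^ 2 := by
      intro Λ hΛ
      have hf : f Λ ≤ -δ := by
        rw [hEdef] at hΛ
        have := (Finset.mem_filter.1 hΛ).2
        simp only [hfdef]; exact this
      have hle : t + u ≤ μ + u - f Λ := by rw [htμ]; linarith
      exact pow_le_pow_left₀ htu.le hle 2
    have h3 : ∑ Λ ∈ E, (μ + u - f Λ) ^ 2 ≤ ∑ Λ ∈ S, (μ + u - f Λ) ^ 2 :=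
      Finset.sum_le_sum_of_subset_of_nonneg
        (by rw [hEdef]; exact Finset.filter_subset _ _) (fun _ _ _ => sq_nonneg _)
    have h4 : ∑ Λ ∈ S, (μ + u - f Λ) ^ 2 = N * (σ2 + u ^ 2) := by
      have expand : ∀ Λ : Finset α, (μ + u - f Λ) ^ 2
          = (f Λ) ^ 2 - 2 * (μ + u) * f Λ + (μ + u) ^ 2 := fun Λ => by ring
      simp only [expand]
      rw [Finset.sum_add_distrib, Finset.sum_sub_distrib, ← Finset.mul_sum,
        Finset.sum_const, nsmul_eq_mul, hcardS, hSfμ, ← hSf2def, hσ2def]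
      field_simp
      ring
    calc (E.card : ℝ) * (t + u) ^ 2 = ∑ Λ ∈ E, (t + u) ^ 2 := h1
      _ ≤ ∑ Λ ∈ E, (μ + u - f Λ) ^ 2 := Finset.sum_le_sum h2
      _ ≤ ∑ Λ ∈ S, (μ + u - f Λ) ^ 2 := h3
      _ = N * (σ2 + u ^ 2) := h4
  have hstep1 : (E.card : ℝ) / N ≤ σ2 / (σ2 + t ^ 2) := by
    have heq : (σ2 + u ^ 2) / ((t + u) ^ 2) = σ2 / (σ2 + t ^ 2) := by
      rw [hudef]
      have ht' : t ≠ 0 := ne_of_gt ht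
      have hst : σ2 + t ^ 2 ≠ 0 := by positivity
      field_simp
      ring
    rw [← heq, div_le_div_iff₀ hNpos (by positivity)]
    linarith [hkey]
  set V : ℝ := (m : ℝ) * Δ ^ 2 * (2 * R ^ 2) / n with hVdef
  clear_value V
  have hΔ2 : 0 < Δ ^ 2 := by positivity
  have hVpos : 0 < V := by rw [hVdef]; positivity
  have hσ2V : σ2 ≤ V := by
    have hμc1 : μ = c1 * Δ ^ 2 / N := by
      rw [hμdef, hc1v]
      field_simp
    have hSf2v : Sf2 = Δ ^ 2 * (c2 * Δ ^ 2 + (c1 - c2) * Q) := by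
      rw [hSf2def]; simp only [hfdef]; exact hSf2
    have key : σ2 * N ^ 2 = N * Sf2 - (c1 * Δ ^ 2) ^ 2 := by
      rw [hσ2def, hμc1]
      field_simp
    have h2 : σ2 * N ^ 2 ≤ c1 * Δ ^ 2 * Q * N := by
      rw [key, hSf2v]
      have hint1 := mul_le_mul_of_nonneg_right hid2 (sq_nonneg (Δ ^ 2))
      have hint2 := mul_nonneg (mul_nonneg (mul_nonneg hNpos.le hc2nn) hQ0) (sq_nonneg Δ)
      clear * - hint1 hint2
      nlinarith [hint1, hint2]
    have h3 : c1 * Δ ^ 2 * Q * N = ((m : ℝ) * Δ ^ 2 * Q / n) * N ^ 2 := by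
      rw [hc1v]
      field_simp
    have h4 : σ2 ≤ (m : ℝ) * Δ ^ 2 * Q / n := by
      have := h2.trans_eq h3
      exact le_of_mul_le_mul_right this (by positivity)
    refine h4.trans ?_
    rw [hVdef]
    gcongr
  have hstep2 : σ2 / (σ2 + t ^ 2) ≤ V / (V + t ^ 2) := by
    have hp1 : 0 < σ2 + t ^ 2 := by positivity
    have hp2 : 0 < V + t ^ 2 := by positivity
    rw [div_le_div_iff₀ hp1 hp2]
    have hint := mul_le_mul_of_nonneg_right hσ2V (sq_nonneg t)
    clear * - hint
    nlinarith [hint]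
  have hstep3 : V / (V + t ^ 2) ≤ (1 + W / (2 * n * R ^ 2))⁻¹ := by
    have hp2 : 0 < V + t ^ 2 := by positivity
    rw [inv_eq_one_div, div_le_div_iff₀ hp2 hRHSpos, one_mul]
    have hmW : (m : ℝ) * Δ ^ 2 ≤ W := by
      rw [hWdef]
      have := mul_pos hnR hδ
      linarith
    have hVW : V * (W / (2 * n * R ^ 2)) = (m : ℝ) * Δ ^ 2 * W / n ^ 2 := by
      rw [hVdef]
      field_simp
    have ht2 : t ^ 2 = W ^ 2 / n ^ 2 := by rw [htdef, div_pow]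
    have h5 : (m : ℝ) * Δ ^ 2 * W / n ^ 2 ≤ W ^ 2 / n ^ 2 := by
      gcongr
      have hint := mul_le_mul_of_nonneg_right hmW hW0.le
      clear * - hint
      nlinarith [hint]
    calc V * (1 + W / (2 * n * R ^ 2)) = V + V * (W / (2 * n * R ^ 2)) := by ring
      _ = V + (m : ℝ) * Δ ^ 2 * W / n ^ 2 := by rw [hVW]
      _ ≤ V + W ^ 2 / n ^ 2 := by linarith
      _ = V + t ^ 2 := by rw [ht2]
      
  calc ((E.card : ℝ)) / N ≤ σ2 / (σ2 + t ^ 2) := hstep1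
    _ ≤ V / (V + t ^ 2) := hstep2
    _ ≤ (1 + W / (2 * n * R ^ 2))⁻¹ := hstep3
end

section
/- Policy comparison guarantee (Theorem 2 of the paper, abstract form): Let ρ, η : A → ℝ on a finite set A of cardinality n with values ρ(a) ∈ [−R, R] and ∑_a |η(a)| ≤ 2, and let Λ be a uniformly random m-element subset of A. Set τ = ∑_{a∈Λ} ρ(a)η(a) and Δ = ∑_{a∈A} ρ(a)η(a) with Δ ≠ 0. Then P[τ·Δ ≤ 0] ≤ exp(− m² Δ² / (8 n² R²)). -/
/-!
Write `τ_Λ = ∑_{a∈Λ} ρ(a)η(a)`. Each `a ∈ A` lies in a fraction `m / n` of the `m`-subsets, so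
under the uniform distribution on them `τ_Λ · Δ` has mean `m Δ² / n`, and `|τ_Λ · Δ| ≤ 2R|Δ|`
because `|τ_Λ| ≤ R ∑_a |η(a)| ≤ 2R`. The event `τ_Λ · Δ ≤ 0` is a deviation of the whole mean
below it, so Hoeffding's inequality for a single variable with values in an interval of length
`4R|Δ|` bounds its probability by `exp (-2 (m Δ² / n)² / (4R|Δ|)²)`.
-/

open Finset MeasureTheory ProbabilityTheory Real

theorem measureReal_le_integral_sub_le_exp {Ω : Type*} [MeasurableSpace Ω] {μ : Measure Ω}
    [IsProbabilityMeasure μ] {X : Ω → ℝ} {a b ε : ℝ} (hX : AEMeasurable X μ)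
    (hab : ∀ᵐ ω ∂μ, X ω ∈ Set.Icc a b) (hε : 0 ≤ ε) :
    μ.real {ω | X ω ≤ μ[X] - ε} ≤ exp (-2 * ε ^ 2 / (b - a) ^ 2) := by
  have hset : {ω | X ω ≤ μ[X] - ε} = {ω | ε ≤ (-fun ω ↦ X ω - μ[X]) ω} := by
    ext ω
    simp only [Set.mem_ofPred_eq, Pi.neg_apply]
    constructor <;> intro h <;> linarith
  have hexp : -ε ^ 2 / (2 * ((‖b - a‖₊ / 2) ^ 2 : NNReal)) = -2 * ε ^ 2 / (b - a) ^ 2 := by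
    push_cast
    rw [Real.norm_eq_abs, div_pow, sq_abs]
    generalize (b - a) ^ 2 = d
    ring
  rw [hset, ← hexp]
  exact (hasSubgaussianMGF_of_mem_Icc hX hab).neg.measure_ge_le hε

theorem card_filter_le_sub_le_exp {ι : Type*} {S : Finset ι} (hS : S.Nonempty)
    {f : ι → ℝ} {a b ε : ℝ} (hf : ∀ i ∈ S, f i ∈ Set.Icc a b) (hε : 0 ≤ ε) :
    (#{i ∈ S | f i ≤ (∑ i ∈ S, f i) / #S - ε} : ℝ) / #S ≤ exp (-2 * ε ^ 2 / (b - a) ^ 2) := by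
  classical
  let _ : MeasurableSpace ι := ⊤
  have _ : MeasurableSingletonClass ι := ⟨fun _ ↦ trivial⟩
  let μ := uniformOn (S : Set ι)
  have _ : IsProbabilityMeasure μ := isProbabilityMeasure_uniformOn S.finite_toSet hS
  have hμ (T : Finset ι) : μ.real T = #(S ∩ T) / #S := by
    simp [μ, measureReal_def, uniformOn_apply_finset]
  have hae : ∀ᵐ i ∂μ, i ∈ S := ae_cond_mem S.measurableSet
  have hmean : μ[f] = (∑ i ∈ S, f i) / #S := by
    rw [← Measure.restrict_eq_self_of_ae_mem hae, setIntegral_finset _ IntegrableOn.finset,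
      Finset.sum_div]
    refine Finset.sum_congr rfl fun i hi ↦ ?_
    rw [← coe_singleton, hμ, inter_singleton_of_mem hi, card_singleton, smul_eq_mul]
    ring
  calc (#{i ∈ S | f i ≤ (∑ i ∈ S, f i) / #S - ε} : ℝ) / #S
      = μ.real {i | f i ≤ μ[f] - ε} := by
        rw [hmean, measureReal_def, ← uniformOn_inter_self S.finite_toSet, ← measureReal_def,
          ← inter_eq_right.mpr (filter_subset _ S), ← hμ]
        congr 2
        ext i
        simp
    _ ≤ exp (-2 * ε ^ 2 / (b - a) ^ 2) :=
        measureReal_le_integral_sub_le_exp measurable_from_top.aemeasurable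
          (hae.mono fun i hi ↦ hf i hi) hε

theorem sum_powersetCard_sum_eq_choose_smul {α M : Type*} [AddCommMonoid M]
    (A : Finset α) {m : ℕ} (hm : 1 ≤ m) (g : α → M) :
    ∑ Λ ∈ A.powersetCard m, ∑ a ∈ Λ, g a = (#A - 1).choose (m - 1) • ∑ a ∈ A, g a := by
  classical
  rw [sum_comm' (t' := A) (s' := fun a ↦ {Λ ∈ A.powersetCard m | {a} ⊆ Λ}), smul_sum]
  · refine sum_congr rfl fun a ha ↦ ?_
    rw [sum_const, card_filter_powersetCard_subset _ _ _ (singleton_subset_iff.2 ha)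
      (by simpa using hm), card_singleton]
  · intro Λ a
    simp only [mem_powersetCard, mem_filter, singleton_subset_iff]
    exact ⟨fun h ↦ ⟨h, h.1.1 h.2⟩, And.left⟩

theorem sum_powersetCard_sum_div_choose {α : Type*} (A : Finset α) {m : ℕ}
    (hm : 1 ≤ m) (hmA : m ≤ #A) (g : α → ℝ) :
    (∑ Λ ∈ A.powersetCard m, ∑ a ∈ Λ, g a) / (#A).choose m = m / #A * ∑ a ∈ A, g a := by
  have hchoose : (#A : ℝ) * (#A - 1).choose (m - 1) = m * (#A).choose m := by
    have h := Nat.add_one_mul_choose_eq (#A - 1) (m - 1)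
    rw [Nat.sub_add_cancel (hm.trans hmA), Nat.sub_add_cancel hm, mul_comm _ m] at h
    exact_mod_cast h
  have hA : (#A : ℝ) ≠ 0 := by exact_mod_cast (by omega : #A ≠ 0)
  have hC : ((#A).choose m : ℝ) ≠ 0 := by exact_mod_cast (Nat.choose_pos hmA).ne'
  rw [sum_powersetCard_sum_eq_choose_smul A hm, nsmul_eq_mul]
  field_simp
  linear_combination (∑ a ∈ A, g a) * hchoose

theorem abs_sum_mul_le_of_subset {α : Type*} {Λ A : Finset α} (hΛA : Λ ⊆ A) {ρ η : α → ℝ} {R : ℝ}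
    (hρ : ∀ a ∈ A, |ρ a| ≤ R) :
    |∑ a ∈ Λ, ρ a * η a| ≤ R * ∑ a ∈ A, |η a| :=
  calc |∑ a ∈ Λ, ρ a * η a| ≤ ∑ a ∈ Λ, |ρ a * η a| := abs_sum_le_sum_abs _ _
    _ ≤ ∑ a ∈ A, |ρ a * η a| :=
        sum_le_sum_of_subset_of_nonneg hΛA fun _ _ _ ↦ abs_nonneg _
    _ ≤ ∑ a ∈ A, R * |η a| := sum_le_sum fun a ha ↦ by
        rw [abs_mul]
        exact mul_le_mul_of_nonneg_right (hρ a ha) (abs_nonneg _)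
    _ = R * ∑ a ∈ A, |η a| := (mul_sum _ _ _).symm

theorem policy_comparison_guarantee_general {α : Type*}
    (A : Finset α) (ρ η : α → ℝ) (n m : ℕ) (R : ℝ)
    (hn : A.card = n) (hm1 : 1 ≤ m) (hmn : m ≤ n)
    (hR : 0 < R) (hρ : ∀ a ∈ A, |ρ a| ≤ R)
    (hη : ∑ a ∈ A, |η a| ≤ 2) :
    (((A.powersetCard m).filter
        (fun Λ => (∑ a ∈ Λ, ρ a * η a) * (∑ a ∈ A, ρ a * η a) ≤ 0)).card : ℝ)
        / (n.choose m : ℝ)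
      ≤ Real.exp (-((m : ℝ) ^ 2 * (∑ a ∈ A, ρ a * η a) ^ 2)
            / (8 * (n : ℝ) ^ 2 * R ^ 2)) := by
  set Δ := ∑ a ∈ A, ρ a * η a
  subst hn
  have hbound : ∀ Λ ∈ A.powersetCard m,
      (∑ a ∈ Λ, ρ a * η a) * Δ ∈ Set.Icc (-(2 * R * |Δ|)) (2 * R * |Δ|) := by
    intro Λ hΛ
    have hτ := (abs_sum_mul_le_of_subset (mem_powersetCard.1 hΛ).1 hρ (η := η)).trans
      (mul_le_mul_of_nonneg_left hη hR.le)
    rw [Set.mem_Icc, ← abs_le, abs_mul]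
    nlinarith [abs_nonneg Δ]
  have hmean : (∑ Λ ∈ A.powersetCard m, (∑ a ∈ Λ, ρ a * η a) * Δ) / #(A.powersetCard m)
      = m * Δ ^ 2 / #A := by
    rw [← sum_mul, card_powersetCard, mul_div_right_comm,
      sum_powersetCard_sum_div_choose A hm1 hmn]
    ring
  have hexp : -2 * (m * Δ ^ 2 / #A) ^ 2 / (2 * R * |Δ| - -(2 * R * |Δ|)) ^ 2
      = -((m : ℝ) ^ 2 * Δ ^ 2) / (8 * (#A : ℝ) ^ 2 * R ^ 2) := by
    have hA : (#A : ℝ) ≠ 0 := by exact_mod_cast (by omega : #A ≠ 0)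
    rw [show 2 * R * |Δ| - -(2 * R * |Δ|) = 4 * R * |Δ| by ring, mul_pow, sq_abs]
    field_simp
    ring
  have h := card_filter_le_sub_le_exp (powersetCard_nonempty.2 hmn) hbound (ε := m * Δ ^ 2 / #A)
    (by positivity)
  rwa [hmean, sub_self, card_powersetCard, hexp] at h

/-- Policy comparison guarantee (Theorem 2 of the paper, abstract form): with
`τ_Λ = ∑_{a∈Λ} ρ(a)η(a)` for `Λ` a uniformly random `m`-element subset of `A`
and `Δ = ∑_{a∈A} ρ(a)η(a) ≠ 0`, `P[τ·Δ ≤ 0] ≤ exp(−m²Δ²/(8n²R²))`. -/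
theorem policy_comparison_guarantee {α : Type*} [DecidableEq α]
    (A : Finset α) (ρ η : α → ℝ) (n m : ℕ) (R : ℝ)
    (hn : A.card = n) (hm1 : 1 ≤ m) (hmn : m ≤ n)
    (hR : 0 < R) (hρ : ∀ a ∈ A, |ρ a| ≤ R)
    (hη : ∑ a ∈ A, |η a| ≤ 2)
    (hΔ : (∑ a ∈ A, ρ a * η a) ≠ 0) :
    (((A.powersetCard m).filter
        (fun Λ => (∑ a ∈ Λ, ρ a * η a) * (∑ a ∈ A, ρ a * η a) ≤ 0)).card : ℝ)
        / (n.choose m : ℝ)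
      ≤ Real.exp (-((m : ℝ) ^ 2 * (∑ a ∈ A, ρ a * η a) ^ 2)
            / (8 * (n : ℝ) ^ 2 * R ^ 2)) :=
  policy_comparison_guarantee_general A ρ η n m R hn hm1 hmn hR hρ hη
end
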